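/- For the emptiness-tracking transformation, every generated tree has a well-typed image: for any tree π over an alphabet with binary br, nullary e, and other nullary terminals, there exist τ ∈ {o^ε, o⁺} and a tree π' such that ⊢ π : τ ↪ π' is derivable, with τ = o⁺ and leaves(π') = rem_e(leaves(π)) if rem_e(leaves(π)) ≠ ε, and τ = o^ε and π' = e otherwise. -/

import Mathlib

/-- Sorts (simple types): κ ::= o | κ₁ → κ₂. -/
inductive STy where
  | o : STy
  | arr : STy → STy → STy
deriving DecidableEq

/-- ord(o)=0, ord(κ₁→κ₂)=max(ord κ₁ + 1, ord κ₂). -/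
def STy.ord : STy → Nat
  | .o => 0
  | .arr a b => max (a.ord + 1) b.ord

/-- The list of argument sorts of a sort. -/
def STy.args : STy → List STy
  | .o => []
  | .arr a b => a :: b.args

/-- The sort o → ⋯ → o → o with n arguments (sort of an arity-n terminal). -/
def tyOfArity : Nat → STy
  | 0 => .o
  | n + 1 => .arr .o (tyOfArity n)

/-- Applicative terms over non-terminals `N` and terminals `T`,
    with variables named by natural numbers. -/
inductive Tm (N T : Type) where
  | var : Nat → Tm N T
  | nt : N → Tm N T
  | tm : T → Tm N T
  | app : Tm N T → Tm N T → Tm N T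
deriving DecidableEq

/-- Simultaneous substitution of the terms `ts` for the variables 0,…,k−1. -/
def substL {N T : Type} (ts : List (Tm N T)) : Tm N T → Tm N T
  | .var n => ts.getD n (.var n)
  | .nt A => .nt A
  | .tm a => .tm a
  | .app s t => .app (substL ts s) (substL ts t)

/-- Simple typing of applicative terms: terminals of arity k have sort o^k → o. -/
inductive HasTy {N T : Type} (ar : T → Nat) (nty : N → STy) :
    List STy → Tm N T → STy → Prop where
  | var {Γ n κ} : Γ[n]? = some κ → HasTy ar nty Γ (.var n) κ
  | nt {Γ A} : HasTy ar nty Γ (.nt A) (nty A)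
  | tm {Γ a} : HasTy ar nty Γ (.tm a) (tyOfArity (ar a))
  | app {Γ s t κ₁ κ₂} : HasTy ar nty Γ s (.arr κ₁ κ₂) → HasTy ar nty Γ t κ₁ →
      HasTy ar nty Γ (.app s t) κ₂

/-- A higher-order grammar over terminals `T` with arities `ar`: finitely many
    sorted non-terminals, a base-sort start symbol, and for each non-terminal a
    finite set of rule bodies `t` (the rule being A x₁ ⋯ x_k → t), each
    well-typed of base sort under the parameter sorts of A. -/
structure Grammar (T : Type) (ar : T → Nat) where
  N : Type
  nFin : Finite N
  nty : N → STy
  start : N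
  startO : nty start = .o
  rules : N → List (Tm N T)
  rulesTy : ∀ A t, t ∈ rules A → HasTy ar nty (nty A).args t .o

/-- Iterated application to a list of arguments. -/
def appList {N T : Type} : Tm N T → List (Tm N T) → Tm N T
  | s, [] => s
  | s, t :: ts => appList (.app s t) ts

/-- One-step rewriting: a fully applied non-terminal is rewritten by one of its
    rules, and reduction is allowed in the arguments of a terminal. -/
inductive Red {T : Type} {ar : T → Nat} (G : Grammar T ar) :
    Tm G.N T → Tm G.N T → Prop where
  | step {A body ts} : body ∈ G.rules A → ts.length = (G.nty A).args.length →
      Red G (appList (.nt A) ts) (substL ts body)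
  | ctx {a t t' ts₁ ts₂} : Red G t t' → ts₁.length + 1 + ts₂.length = ar a →
      Red G (appList (.tm a) (ts₁ ++ t :: ts₂)) (appList (.tm a) (ts₁ ++ t' :: ts₂))

/-- Many-step reduction. -/
def RedStar {T : Type} {ar : T → Nat} (G : Grammar T ar) :
    Tm G.N T → Tm G.N T → Prop :=
  Relation.ReflTransGen (Red G)

/-- The grammar has order at most n. -/
def Grammar.orderLE {T : Type} {ar : T → Nat} (G : Grammar T ar) (n : Nat) : Prop :=
  ∀ A, (G.nty A).ord ≤ n

/-- Terminal alphabet of word grammars: `some a` has arity 1, `none` is the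
    end-of-word symbol e of arity 0. -/
def wordAr {β : Type} : Option β → Nat
  | none => 0
  | some _ => 1

/-- The term a₁(⋯(a_n e)⋯) representing the word a₁⋯a_n. -/
def wordTm {N β : Type} : List β → Tm N (Option β)
  | [] => .tm none
  | a :: w => .app (.tm (some a)) (wordTm w)

/-- The word language of a word grammar. -/
def WordLang {β : Type} (G : Grammar (Option β) wordAr) : Set (List β) :=
  { w | RedStar G (.nt G.start) (wordTm w) }

/-- Terminal alphabet of tree grammars: a binary `br`, a nullary `e`, and
    nullary letters from β. -/
inductive TSym (β : Type) where
  | br : TSym β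
  | e : TSym β
  | ltr : β → TSym β
deriving DecidableEq

def treeAr {β : Type} : TSym β → Nat
  | .br => 2
  | .e => 0
  | .ltr _ => 0

/-- Trees over the alphabet {br, e} ∪ β. -/
inductive BT (β : Type) where
  | e : BT β
  | ltr : β → BT β
  | br : BT β → BT β → BT β
deriving DecidableEq

/-- A tree as an applicative term. -/
def BT.toTm {N β : Type} : BT β → Tm N (TSym β)
  | .e => .tm .e
  | .ltr a => .tm (.ltr a)
  | .br l r => .app (.app (.tm .br) l.toTm) r.toTm

/-- The frontier word of a tree; `none` stands for the leaf symbol e. -/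
def BT.leaves {β : Type} : BT β → List (Option β)
  | .e => [none]
  | .ltr a => [some a]
  | .br l r => l.leaves ++ r.leaves

/-- The frontier language of a tree grammar. -/
def LeafLang {β : Type} (G : Grammar (TSym β) treeAr) : Set (List (Option β)) :=
  { w | ∃ π : BT β, RedStar G (.nt G.start) π.toTm ∧ π.leaves = w }

/-- The ε-adjusted frontier language: the single-leaf word "e" counts as ε. -/
def LeafLangE {β : Type} (G : Grammar (TSym β) treeAr) : Set (List (Option β)) :=
  { w | w ∈ LeafLang G ∧ w ≠ [none] } ∪ { w | w = [] ∧ [none] ∈ LeafLang G }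

/-- Extended terms u ::= x | A | a | u U | λx.u, where an argument
    U = {u₁,…,u_k} (k ≥ 1) is a non-empty set of terms representing
    non-deterministic choice (represented as a list). -/
inductive ETm (V N T : Type) where
  | var : V → ETm V N T
  | nt : N → ETm V N T
  | tm : T → ETm V N T
  | app : ETm V N T → List (ETm V N T) → ETm V N T
  | lam : V → ETm V N T → ETm V N T

/-- Iterated application of a head to a list of argument sets. -/
def appLE {V N T : Type} : ETm V N T → List (List (ETm V N T)) → ETm V N T
  | u, [] => u
  | u, U :: Us => appLE (.app u U) Us

/-- The set-valued substitution [σ]u of term-sets for variables in an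
    extended term. -/
def dsub {V N T : Type} [DecidableEq V]
    (σ : V → Option (List (ETm V N T))) : ETm V N T → List (ETm V N T)
  | .var x => (σ x).getD [.var x]
  | .nt A => [.nt A]
  | .tm a => [.tm a]
  | .app u U =>
      (dsub σ u).map (fun v => .app v (U.attach.flatMap (fun w => dsub σ w.1)))
  | .lam x u =>
      (dsub (fun y => if y = x then none else σ y) u).map (.lam x)
termination_by u => sizeOf u
decreasing_by
  all_goals simp_wf
  all_goals first
    | omega
    | (have := List.sizeOf_lt_of_mem w.2; omega)

/-- v ∈ [σ]u : v is one of the results of the set-valued substitution. -/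
def DSub {V N T : Type} [DecidableEq V]
    (σ : V → Option (List (ETm V N T))) (u v : ETm V N T) : Prop :=
  v ∈ dsub σ u

/-- An extended higher-order grammar: rules A x₁ ⋯ x_k → u. -/
structure EGrammar (V N T : Type) (ar : T → Nat) where
  start : N
  rules : N → List V → ETm V N T → Prop

/-- The substitution sending the parameters xs to the argument sets Us. -/
def sigmaOf {V N T : Type} [DecidableEq V] (xs : List V)
    (Us : List (List (ETm V N T))) : V → Option (List (ETm V N T)) :=
  fun x => ((xs.zip Us).find? (fun p => p.1 = x)).map Prod.snd

/-- One-step reduction of extended terms: a fully applied non-terminal is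
    rewritten (lazily, via the set-valued substitution); under a terminal,
    either a singleton argument is reduced, or a non-singleton argument set is
    collapsed to one of its members. -/
inductive ERed {V N T : Type} [DecidableEq V] {ar : T → Nat}
    (G : EGrammar V N T ar) : ETm V N T → ETm V N T → Prop where
  | step {A xs body Us u'} : G.rules A xs body → Us.length = xs.length →
      DSub (sigmaOf xs Us) body u' →
      ERed G (appLE (.nt A) Us) u'
  | ctx {a u u' Us₁ Us₂} : ERed G u u' →
      Us₁.length + 1 + Us₂.length = ar a →
      ERed G (appLE (.tm a) (Us₁ ++ [u] :: Us₂))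
             (appLE (.tm a) (Us₁ ++ [u'] :: Us₂))
  | collapse {a u U Us₁ Us₂} : u ∈ U → U.length ≠ 1 →
      Us₁.length + 1 + Us₂.length = ar a →
      ERed G (appLE (.tm a) (Us₁ ++ U :: Us₂))
             (appLE (.tm a) (Us₁ ++ [u] :: Us₂))

/-- Many-step reduction of extended terms. -/
def ERedStar {V N T : Type} [DecidableEq V] {ar : T → Nat}
    (G : EGrammar V N T ar) : ETm V N T → ETm V N T → Prop :=
  Relation.ReflTransGen (ERed G)

/-- Emptiness-tracking intersection types: τ ::= o^ε | o⁺ | τ₁∧⋯∧τ_k → τ. -/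
inductive TTy where
  | eps : TTy
  | plus : TTy
  | arr : List TTy → TTy → TTy

noncomputable instance : DecidableEq TTy := Classical.decEq TTy

/-- τ refines the sort κ (both o^ε and o⁺ refine o). -/
inductive RefT : TTy → STy → Prop where
  | eps : RefT .eps .o
  | plus : RefT .plus .o
  | arr {l τ κ₁ κ₂} : (∀ τ' ∈ l, RefT τ' κ₁) → RefT τ κ₂ →
      RefT (.arr l τ) (.arr κ₁ κ₂)

/-- The sort erasure of an intersection type: both base types go to o,
    τ₁∧⋯∧τ_k → τ goes to ⟨τ₁⟩ → ⋯ → ⟨τ_k⟩ → ⟨τ⟩. -/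
def tty2sort : TTy → STy
  | .eps => .o
  | .plus => .o
  | .arr l τ =>
      (l.attach.map (fun w => tty2sort w.1)).foldr STy.arr (tty2sort τ)
termination_by τ => sizeOf τ
decreasing_by
  all_goals simp_wf
  all_goals first
    | omega
    | (have := List.sizeOf_lt_of_mem w.2; omega)

/-- The return type of an intersection type (after all arrows). -/
def retTy : TTy → TTy
  | .arr _ τ => retTy τ
  | .eps => .eps
  | .plus => .plus

/-- The environment binding the i-th parameter (i = offset, 0-based) to each
    of its conjuncts. -/
noncomputable def paramEnv : TTy → Nat → Finset (Nat × TTy)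
  | .arr l τ, i => (l.map (fun τ' => (i, τ'))).toFinset ∪ paramEnv τ (i + 1)
  | _, _ => ∅

/-- The replicated parameter list x'₁,…,x'_ℓ of a transformed rule. -/
def paramList : TTy → Nat → List (Nat × TTy)
  | .arr l τ, i => l.map (fun τ' => (i, τ')) ++ paramList τ (i + 1)
  | _, _ => []

/-- The step-2 (emptiness-tracking) type-directed transformation
    Γ ⊢ t : τ ↪ u (rules Tr2-*).  Variables and non-terminals are replicated
    per type; subterms of type o^ε under br are eliminated; applications are
    replicated per conjunct; the rule for a non-terminal requires that some
    rule body of it is itself transformable at that type. -/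
inductive Tr2 {β : Type} (G : Grammar (TSym β) treeAr) :
    Finset (Nat × TTy) → Tm G.N (TSym β) → TTy →
    ETm (Nat × TTy) (Option (G.N × TTy)) (TSym β) → Prop where
  | var {Δ x τ} : (x, τ) ∈ Δ → Tr2 G Δ (.var x) τ (.var (x, τ))
  | ce {Δ} : Tr2 G Δ (.tm .e) .eps (.tm .e)
  | ca {Δ a} : Tr2 G Δ (.tm (.ltr a)) .plus (.tm (.ltr a))
  | brPP {Δ t₀ t₁ u₀ u₁} : Tr2 G Δ t₀ .plus u₀ → Tr2 G Δ t₁ .plus u₁ →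
      Tr2 G Δ (.app (.app (.tm .br) t₀) t₁) .plus
        (.app (.app (.tm .br) [u₀]) [u₁])
  | brPE {Δ t₀ t₁ u₀ u₁} : Tr2 G Δ t₀ .plus u₀ → Tr2 G Δ t₁ .eps u₁ →
      Tr2 G Δ (.app (.app (.tm .br) t₀) t₁) .plus u₀
  | brEP {Δ t₀ t₁ u₀ u₁} : Tr2 G Δ t₀ .eps u₀ → Tr2 G Δ t₁ .plus u₁ →
      Tr2 G Δ (.app (.app (.tm .br) t₀) t₁) .plus u₁
  | brEE {Δ t₀ t₁ u₀ u₁} : Tr2 G Δ t₀ .eps u₀ → Tr2 G Δ t₁ .eps u₁ →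
      Tr2 G Δ (.app (.app (.tm .br) t₀) t₁) .eps (.tm .e)
  | nt {Δ A τ t u} : RefT τ (G.nty A) → t ∈ G.rules A →
      Tr2 G (paramEnv τ 0) t (retTy τ) u →
      Tr2 G Δ (.nt A) τ (.nt (some (A, τ)))
  | app {Δ s t l τ v Us} : Tr2 G Δ s (.arr l τ) v →
      Us.length = l.length →
      (∀ i, i < l.length → Us.getD i [] ≠ []) →
      (∀ i, i < l.length → ∀ u ∈ Us.getD i [], Tr2 G Δ t (l.getD i .eps) u) →
      Tr2 G Δ (.app s t) τ (appLE v Us)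

/-- A tree as an extended term. -/
def BT.toETm {V N β : Type} : BT β → ETm V N (TSym β)
  | .e => .tm .e
  | .ltr a => .tm (.ltr a)
  | .br l r => .app (.app (.tm .br) [l.toETm]) [r.toETm]

/-!
The transformation deletes e-leaves bottom-up: a subtree gets type o^ε exactly when all of its
leaves are e, and `br` drops such a subtree. So the witness π' is π with its all-e subtrees
pruned away.
-/

namespace BT

variable {β : Type}

/-- The tree analogue of rem_e; `none` when every leaf is e. -/
def removeE : BT β → Option (BT β)
  | .e => none
  | .ltr a => some (.ltr a)
  | .br l r =>
    match l.removeE, r.removeE with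
    | some l', some r' => some (.br l' r')
    | some l', none => some l'
    | none, r' => r'

theorem leaves_ne_nil (π : BT β) : π.leaves ≠ [] := by
  induction π with
  | e | ltr => simp [leaves]
  | br l r ihl _ => simp [leaves, ihl]

theorem removeE_elim_leaves (π : BT β) :
    π.removeE.elim [] leaves = π.leaves.filter (fun a => a.isSome) := by
  induction π with
  | e | ltr => rfl
  | br l r ihl ihr =>
    rw [leaves, List.filter_append, ← ihl, ← ihr]
    cases hl : l.removeE <;> cases hr : r.removeE <;> simp [removeE, leaves, hl, hr]

theorem tr2_toTm_removeE (G : Grammar (TSym β) treeAr) (Δ : Finset (Nat × TTy)) (π : BT β) :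
    Tr2 G Δ π.toTm (if π.removeE.isSome then .plus else .eps) (π.removeE.getD .e).toETm := by
  induction π with
  | e => exact .ce
  | ltr => exact .ca
  | br l r ihl ihr =>
    cases hl : l.removeE <;> cases hr : r.removeE <;>
      simp only [hl, hr, removeE, Option.isSome_none, Option.isSome_some, Option.getD_none,
        Option.getD_some, Bool.false_eq_true, if_false, if_true] at ihl ihr ⊢
    · exact .brEE ihl ihr
    · exact .brEP ihl ihr
    · exact .brPE ihl ihr
    · exact .brPP ihl ihr

end BT

/-- Every tree has a well-typed image under the step-2 transformation:
    for any tree π there are τ ∈ {o^ε, o⁺} and a tree π' with ⊢ π : τ ↪ π',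
    where τ = o⁺ and leaves(π') = rem_e(leaves(π)) if rem_e(leaves(π)) ≠ ε,
    and τ = o^ε and π' = e otherwise. -/
theorem stmt16 {β : Type} (G : Grammar (TSym β) treeAr) (π : BT β) :
    ∃ (τ : TTy) (π' : BT β),
      Tr2 G ∅ (π.toTm) τ (π'.toETm) ∧
      ((π.leaves.filter (fun a => a.isSome) ≠ [] ∧ τ = .plus ∧
          π'.leaves = π.leaves.filter (fun a => a.isSome)) ∨
       (π.leaves.filter (fun a => a.isSome) = [] ∧ τ = .eps ∧ π' = .e)) := by
  refine ⟨_, _, π.tr2_toTm_removeE G ∅, ?_⟩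
  have hleaves := π.removeE_elim_leaves
  cases hπ : π.removeE with
  | none =>
    rw [hπ] at hleaves
    exact .inr ⟨hleaves.symm, rfl, rfl⟩
  | some π' =>
    rw [hπ] at hleaves
    exact .inl ⟨hleaves ▸ π'.leaves_ne_nil, rfl, hleaves⟩
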